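/- arXiv:0910.4701 — 2 statements merged into one kernel-verified Lean document; each statement's English description precedes it below -/
import Mathlib

section
/- There exists a constant C > 0 such that for every v ∈ V and every u ∈ H, the sequence B(u,v) belongs to H and |B(u,v)|_H ≤ C ||v||_V |u|_H, where B is the GOY bilinear operator. -/
open ComplexConjugate

noncomputable section

/-- Extension of a sequence `(u_n)_{n ≥ 1}` to integer indices, with the boundary
convention `u_m = 0` for `m ≤ 0` (in particular `u_0 = u_{-1} = 0`). -/
def ext (u : ℕ → ℂ) : ℤ → ℂ := fun m => if 1 ≤ m then u m.toNat else 0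

/-- Wave numbers `k_n = k₀ 2^n`. -/
def kseq (k₀ : ℝ) (n : ℤ) : ℝ := k₀ * 2 ^ n

/-- The GOY bilinear operator. -/
def goyB (k₀ : ℝ) (u v : ℕ → ℂ) : ℕ → ℂ := fun n =>
  Complex.I * (kseq k₀ n) *
    ( (1/4 : ℂ) * conj (ext v ((n : ℤ) - 1)) * conj (ext u ((n : ℤ) + 1))
      - (1/2 : ℂ) * (conj (ext u ((n : ℤ) + 1)) * conj (ext v ((n : ℤ) + 2))
          + conj (ext v ((n : ℤ) + 1)) * conj (ext u ((n : ℤ) + 2)))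
      + (1/8 : ℂ) * conj (ext u ((n : ℤ) - 1)) * conj (ext v ((n : ℤ) - 2)) )

/-- Membership in `H`: square-summability over `n ≥ 1`. -/
def memH (u : ℕ → ℂ) : Prop := Summable (fun n : ℕ => ‖u (n + 1)‖ ^ 2)

/-- The `H`-norm `|u|_H = (∑_{n ≥ 1} |u_n|²)^{1/2}`. -/
def normH (u : ℕ → ℂ) : ℝ := Real.sqrt (∑' n : ℕ, ‖u (n + 1)‖ ^ 2)

/-- Membership in `V`: `u ∈ H` and `∑_{n ≥ 1} k_n² |u_n|² < ∞`. -/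
def memV (k₀ : ℝ) (u : ℕ → ℂ) : Prop :=
  memH u ∧ Summable (fun n : ℕ => (kseq k₀ (n + 1)) ^ 2 * ‖u (n + 1)‖ ^ 2)

/-- The `V`-norm `‖u‖_V = (∑_{n ≥ 1} k_n² |u_n|²)^{1/2}`. -/
def normV (k₀ : ℝ) (u : ℕ → ℂ) : ℝ :=
  Real.sqrt (∑' n : ℕ, (kseq k₀ (n + 1)) ^ 2 * ‖u (n + 1)‖ ^ 2)

lemma kseq_pos {k₀ : ℝ} (hk₀ : 0 < k₀) (m : ℤ) : 0 < kseq k₀ m :=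
  mul_pos hk₀ (zpow_pos (by norm_num) m)

lemma kseq_ratio (k₀ : ℝ) (a b : ℤ) : kseq k₀ a = 2 ^ (a - b) * kseq k₀ b := by
  unfold kseq
  rw [zpow_sub₀ (by norm_num : (2:ℝ) ≠ 0)]
  field_simp

lemma ext_at_nat (u : ℕ → ℂ) (n : ℕ) : ext u ((n : ℤ) + 1) = u (n + 1) := by
  have h : ((n : ℤ) + 1) = ((n + 1 : ℕ) : ℤ) := by push_cast; ring
  rw [h]; unfold ext
  rw [if_pos (by exact_mod_cast Nat.succ_le_succ (Nat.zero_le n))]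
  simp

lemma ext_nonpos (u : ℕ → ℂ) (m : ℤ) (h : m ≤ 0) : ext u m = 0 := by
  unfold ext; rw [if_neg (by omega)]

lemma vbound {k₀ : ℝ} (hk₀ : 0 < k₀) {v : ℕ → ℂ} (hv : memV k₀ v) (m : ℤ) :
    kseq k₀ m * ‖ext v m‖ ≤ normV k₀ v := by
  rcases le_or_gt m 0 with h | h
  · rw [ext_nonpos v m h]
    simp [Real.sqrt_nonneg, normV]
  · -- m ≥ 1, m = (j+1 : ℕ)
    obtain ⟨j, rfl⟩ : ∃ j : ℕ, m = (j : ℤ) + 1 := by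
      refine ⟨m.toNat - 1, ?_⟩; omega
    have hnn : 0 ≤ kseq k₀ ((j:ℤ)+1) * ‖ext v ((j:ℤ)+1)‖ :=
      mul_nonneg (kseq_pos hk₀ _).le (norm_nonneg _)
    rw [normV, show ((j:ℤ)+1) = ((j+1:ℕ):ℤ) by push_cast; ring] at *
    rw [Real.le_sqrt hnn]
    have hterm : (kseq k₀ ((j+1:ℕ):ℤ) * ‖ext v ((j+1:ℕ):ℤ)‖) ^ 2
        = (kseq k₀ ((j:ℕ) + 1)) ^ 2 * ‖v (j + 1)‖ ^ 2 := by
      rw [show ((j+1:ℕ):ℤ) = (j:ℤ)+1 by push_cast; ring, ext_at_nat]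
      push_cast
      ring
    rw [hterm]
    exact Summable.le_tsum hv.2 j (fun i _ => by positivity)
    exact tsum_nonneg (fun i => by positivity)

lemma keybound {k₀ : ℝ} (hk₀ : 0 < k₀) {v : ℕ → ℂ} (hv : memV k₀ v) (m j : ℤ) :
    kseq k₀ m * ‖ext v j‖ ≤ 2 ^ (m - j) * normV k₀ v := by
  rw [kseq_ratio k₀ m j, mul_assoc]
  have h2 : (0:ℝ) ≤ 2 ^ (m - j) := by positivity
  exact mul_le_mul_of_nonneg_left (vbound hk₀ hv j) h2

lemma pointwise {k₀ : ℝ} (hk₀ : 0 < k₀) (u v : ℕ → ℂ) (hv : memV k₀ v) (n : ℕ) :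
    ‖goyB k₀ u v n‖ ≤ normV k₀ v *
      (‖ext u ((n:ℤ)+1)‖ + ‖ext u ((n:ℤ)+2)‖ + ‖ext u ((n:ℤ)-1)‖) := by
  have hk : 0 < kseq k₀ (n:ℤ) := kseq_pos hk₀ _
  set V := normV k₀ v with hVdef
  have hVnn : 0 ≤ V := Real.sqrt_nonneg _
  set a := ‖ext u ((n:ℤ)+1)‖ with ha
  set b := ‖ext u ((n:ℤ)+2)‖ with hb
  set c := ‖ext u ((n:ℤ)-1)‖ with hc
  have hanm : 0 ≤ a := norm_nonneg _
  have hbnm : 0 ≤ b := norm_nonneg _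
  have hcnm : 0 ≤ c := norm_nonneg _
  have hE : ‖(1/4 : ℂ) * conj (ext v ((n : ℤ) - 1)) * conj (ext u ((n : ℤ) + 1))
      - (1/2 : ℂ) * (conj (ext u ((n : ℤ) + 1)) * conj (ext v ((n : ℤ) + 2))
          + conj (ext v ((n : ℤ) + 1)) * conj (ext u ((n : ℤ) + 2)))
      + (1/8 : ℂ) * conj (ext u ((n : ℤ) - 1)) * conj (ext v ((n : ℤ) - 2))‖
      ≤ (1/4) * (‖ext v ((n:ℤ)-1)‖ * a)
        + (1/2) * (a * ‖ext v ((n:ℤ)+2)‖ + ‖ext v ((n:ℤ)+1)‖ * b)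
        + (1/8) * (c * ‖ext v ((n:ℤ)-2)‖) := by
    refine le_trans (norm_add_le _ _) (add_le_add ?_ ?_)
    · refine le_trans (norm_sub_le _ _) (add_le_add ?_ ?_)
      · refine le_of_eq ?_
        simp [norm_mul, RCLike.norm_conj, ha]
        try norm_num
        try ring
      · rw [norm_mul]
        refine le_trans (mul_le_mul_of_nonneg_left (norm_add_le _ _) (norm_nonneg _)) ?_
        refine le_of_eq ?_
        simp [norm_mul, RCLike.norm_conj, ha, hb]
        try norm_num
        try ring
    · refine le_of_eq ?_
      simp [norm_mul, RCLike.norm_conj, hc]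
      try norm_num
      try ring
  have hgoy : ‖goyB k₀ u v n‖ ≤ kseq k₀ n *
      ((1/4) * (‖ext v ((n:ℤ)-1)‖ * a)
        + (1/2) * (a * ‖ext v ((n:ℤ)+2)‖ + ‖ext v ((n:ℤ)+1)‖ * b)
        + (1/8) * (c * ‖ext v ((n:ℤ)-2)‖)) := by
    unfold goyB
    rw [norm_mul, norm_mul, Complex.norm_I, one_mul, Complex.norm_real,
      Real.norm_eq_abs, abs_of_pos hk]
    exact mul_le_mul_of_nonneg_left hE hk.le
  refine hgoy.trans ?_
  have r1 : kseq k₀ n * ‖ext v ((n:ℤ)-1)‖ ≤ 2 * V := by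
    have h := keybound hk₀ hv (n:ℤ) ((n:ℤ)-1)
    simpa using h
  have r2 : kseq k₀ n * ‖ext v ((n:ℤ)+2)‖ ≤ (1/4) * V := by
    have h := keybound hk₀ hv (n:ℤ) ((n:ℤ)+2)
    have : ((n:ℤ) - ((n:ℤ)+2)) = (-2 : ℤ) := by ring
    rw [this, show ((2:ℝ)^(-2:ℤ)) = 1/4 by norm_num] at h
    exact h
  have r3 : kseq k₀ n * ‖ext v ((n:ℤ)+1)‖ ≤ (1/2) * V := by
    have h := keybound hk₀ hv (n:ℤ) ((n:ℤ)+1)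
    have : ((n:ℤ) - ((n:ℤ)+1)) = (-1 : ℤ) := by ring
    rw [this, show ((2:ℝ)^(-1:ℤ)) = 1/2 by norm_num] at h
    exact h
  have r4 : kseq k₀ n * ‖ext v ((n:ℤ)-2)‖ ≤ 4 * V := by
    have h := keybound hk₀ hv (n:ℤ) ((n:ℤ)-2)
    have : ((n:ℤ) - ((n:ℤ)-2)) = (2 : ℤ) := by ring
    rw [this, show ((2:ℝ)^(2:ℤ)) = 4 by norm_num] at h
    exact h
  nlinarith [mul_le_mul_of_nonneg_left r1 hanm, mul_le_mul_of_nonneg_left r2 hanm,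
    mul_le_mul_of_nonneg_left r3 hbnm, mul_le_mul_of_nonneg_left r4 hcnm]

lemma ext_cast_succ (u : ℕ → ℂ) (n : ℕ) : ‖ext u (((n+1:ℕ)):ℤ)‖^2 = ‖u (n+1)‖^2 := by
  rw [show (((n+1:ℕ)):ℤ) = (n:ℤ)+1 by push_cast; ring, ext_at_nat]

lemma ext_at_nat2 (u : ℕ → ℂ) (n : ℕ) : ext u ((n : ℤ) + 2) = u (n + 2) := by
  rw [show ((n:ℤ)+2) = ((n+1:ℤ))+1 by ring, show ((n:ℤ)+1) = ((n+1:ℕ):ℤ) by push_cast; ring,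
    ext_at_nat]

set_option maxHeartbeats 1000000 in
/-- There is `C > 0` such that for every `v ∈ V` and `u ∈ H`, `B(u,v) ∈ H` and
`|B(u,v)|_H ≤ C ‖v‖_V |u|_H`, where `B` is the GOY bilinear operator. -/
theorem goy_estimate_HV (k₀ : ℝ) (hk₀ : 0 < k₀) :
    ∃ C : ℝ, 0 < C ∧ ∀ u v : ℕ → ℂ, memH u → memV k₀ v →
      memH (goyB k₀ u v) ∧ normH (goyB k₀ u v) ≤ C * normV k₀ v * normH u := by
  refine ⟨3, by norm_num, fun u v hu hv => ?_⟩
  set V := normV k₀ v with hVdef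
  set U := normH u with hUdef
  have hVnn : 0 ≤ V := Real.sqrt_nonneg _
  have hUnn : 0 ≤ U := Real.sqrt_nonneg _
  have hU2 : U^2 = ∑' n : ℕ, ‖u (n+1)‖^2 := by
    rw [hUdef, normH, Real.sq_sqrt (tsum_nonneg fun n => by positivity)]
  set f : ℕ → ℝ := fun n => ‖u (n+1)‖^2 with hfdef
  have hfnn : ∀ n, 0 ≤ f n := fun n => by positivity
  set g : ℕ → ℝ := fun n => ‖ext u (n:ℤ)‖^2 with hgdef
  have hgf : (fun n : ℕ => g (n+1)) = f := by
    funext n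
    simp only [hgdef, hfdef]
    exact ext_cast_succ u n
  have S1 : Summable (fun n : ℕ => ‖u (n+2)‖^2) := (summable_nat_add_iff 1).2 hu
  have S2 : Summable (fun n : ℕ => ‖u (n+3)‖^2) := (summable_nat_add_iff 2).2 hu
  have S3 : Summable g := (summable_nat_add_iff 1).1 (hgf ▸ hu)
  set G : ℕ → ℝ := fun n => 3*V^2*(‖u (n+2)‖^2 + ‖u (n+3)‖^2 + g n) with hGdef
  have GSum : Summable G := ((S1.add S2).add S3).mul_left (3*V^2)
  have hsq : ∀ n : ℕ, ‖goyB k₀ u v (n+1)‖^2 ≤ G n := by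
    intro n
    have hp := pointwise hk₀ u v hv (n+1)
    rw [show (((n+1:ℕ)):ℤ)+1 = ((n+1:ℤ))+1 by push_cast; ring] at hp
    rw [show ((n+1:ℤ))+1 = (n:ℤ)+2 by ring] at hp
    rw [show (((n+1:ℕ)):ℤ)+2 = ((n+1:ℤ))+2 by push_cast; ring] at hp
    rw [show (((n+1:ℕ)):ℤ)-1 = (n:ℤ) by push_cast; ring] at hp
    rw [ext_at_nat2 u n] at hp
    rw [show ((n+1:ℤ))+2 = ((n+1:ℕ):ℤ)+2 by push_cast; ring, ext_at_nat2 u (n+1)] at hp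
    have h1 : 0 ≤ ‖u (n+2)‖ := norm_nonneg _
    have h2 : 0 ≤ ‖u (n+3)‖ := norm_nonneg _
    have h3 : 0 ≤ ‖ext u (n:ℤ)‖ := norm_nonneg _
    have hB : 0 ≤ ‖goyB k₀ u v (n+1)‖ := norm_nonneg _
    simp only [hGdef, hgdef]
    nlinarith [sq_nonneg (‖u (n+2)‖ - ‖u (n+3)‖), sq_nonneg (‖u (n+2)‖ - ‖ext u (n:ℤ)‖),
      sq_nonneg (‖u (n+3)‖ - ‖ext u (n:ℤ)‖), sq_nonneg V, mul_nonneg hVnn h1,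
      mul_nonneg hVnn h2, mul_nonneg hVnn h3]
  have hBH : memH (goyB k₀ u v) :=
    Summable.of_nonneg_of_le (fun n => by positivity) hsq GSum
  refine ⟨hBH, ?_⟩
  have e1 := Summable.sum_add_tsum_nat_add (f := f) 1 hu
  have e2 := Summable.sum_add_tsum_nat_add (f := f) 2 hu
  have p1 : (0:ℝ) ≤ ∑ i ∈ Finset.range 1, f i := Finset.sum_nonneg fun i _ => hfnn i
  have p2 : (0:ℝ) ≤ ∑ i ∈ Finset.range 2, f i := Finset.sum_nonneg fun i _ => hfnn i
  have A1 : ∑' n : ℕ, ‖u (n+2)‖^2 ≤ U^2 := by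
    rw [hU2]
    have e1' : (∑' (i:ℕ), f (i+1)) = ∑' n:ℕ, ‖u (n+2)‖^2 := rfl
    linarith [e1, p1, e1']
  have A2 : ∑' n : ℕ, ‖u (n+3)‖^2 ≤ U^2 := by
    rw [hU2]
    have e2' : (∑' (i:ℕ), f (i+2)) = ∑' n:ℕ, ‖u (n+3)‖^2 := rfl
    linarith [e2, p2, e2']
  have A3 : ∑' n : ℕ, g n ≤ U^2 := by
    rw [Summable.tsum_eq_zero_add S3]
    have hg0 : g 0 = 0 := by
      simp [hgdef, ext_nonpos u 0 le_rfl]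
    rw [hg0, zero_add, hU2]
    exact le_of_eq (by rw [← hgf])
  have TB : ∑' n : ℕ, ‖goyB k₀ u v (n+1)‖^2 ≤ (3*V*U)^2 := by
    calc ∑' n : ℕ, ‖goyB k₀ u v (n+1)‖^2 ≤ ∑' n, G n :=
          Summable.tsum_le_tsum hsq hBH GSum
      _ = 3*V^2 * ((∑' n : ℕ, ‖u (n+2)‖^2) + (∑' n : ℕ, ‖u (n+3)‖^2) + ∑' n, g n) := by
          rw [hGdef, tsum_mul_left, Summable.tsum_add (S1.add S2) S3, Summable.tsum_add S1 S2]
      _ ≤ 3*V^2 * (U^2 + U^2 + U^2) := by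
          have h32 : 0 ≤ 3*V^2 := by positivity
          exact mul_le_mul_of_nonneg_left (by linarith) h32
      _ = (3*V*U)^2 := by ring
  calc normH (goyB k₀ u v) ≤ Real.sqrt ((3*V*U)^2) := Real.sqrt_le_sqrt TB
    _ = 3*V*U := Real.sqrt_sq (by positivity)

end
end

section
/- Fix δ ∈ ℝ. For the Sabra bilinear operator B with parameter δ, one has the skew-symmetry identity ⟨B(u,v), w⟩_H = −⟨B(u,w), v⟩_H for all u ∈ V and v, w ∈ H, and also for all v, w ∈ V and u ∈ H. -/
open ComplexConjugate

noncomputable section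

/-- The Sabra bilinear operator with parameter `δ`. -/
def sabraB (k₀ δ : ℝ) (u v : ℕ → ℂ) : ℕ → ℂ := fun n =>
  (Complex.I / 3) * (kseq k₀ ((n : ℤ) + 1)) *
      ((1 + (δ : ℂ)) * conj (ext v ((n : ℤ) + 1)) * ext u ((n : ℤ) + 2)
        + (2 - (δ : ℂ)) * conj (ext u ((n : ℤ) + 1)) * ext v ((n : ℤ) + 2))
  + (Complex.I / 3) * (kseq k₀ (n : ℤ)) *
      ((1 - 2 * (δ : ℂ)) * conj (ext u ((n : ℤ) - 1)) * ext v ((n : ℤ) + 1)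
        - (1 + (δ : ℂ)) * conj (ext v ((n : ℤ) - 1)) * ext u ((n : ℤ) + 1))
  + (Complex.I / 3) * (kseq k₀ ((n : ℤ) - 1)) *
      ((2 - (δ : ℂ)) * ext u ((n : ℤ) - 1) * ext v ((n : ℤ) - 2)
        + (1 - 2 * (δ : ℂ)) * ext u ((n : ℤ) - 2) * ext v ((n : ℤ) - 1))

/-- The real inner product of `H`: `⟨u,v⟩_H = Re ∑_{n ≥ 1} u_n conj(v_n)`. -/
def innerH (u v : ℕ → ℂ) : ℝ := ∑' n : ℕ, (u (n + 1) * conj (v (n + 1))).re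

/-! The proof is a summation by parts. Every triad term of `B(u,v)_n conj(w_n)` has a partner in
`B(u,w)_m conj(v_m)` at a neighbouring shell `m`, so that
`Re (B(u,v)_{n+1} conj(w_{n+1})) + Re (B(u,w)_{n+1} conj(v_{n+1})) = Re Π_{n+1} - Re Π_n`,
where `Π_n` is the flux through the boundary between shells `n` and `n + 1`.
`Π_0 = 0` as there are no shells below `1`, and `Π_n → 0`: in each of its triple products one
factor carries the weight `k_n` and is square summable while the other two are bounded. The same
`ℓ² · ℓ^∞` estimate puts `B(u,v)` and `B(u,w)` in `H`, so both series converge and their sum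
telescopes to `lim Π_n - Π_0 = 0`. -/

open Filter Topology ENNReal Function

section Memℓp

variable {α β E : Type*} [NormedAddCommGroup E] {p : ℝ≥0∞}

theorem Memℓp.comp_injective (hp : 0 < p.toReal) {f : β → E} (hf : Memℓp f p) {e : α → β}
    (he : Injective e) : Memℓp (f ∘ e) p :=
  memℓp_gen ((hf.summable hp).comp_injective he)

theorem Memℓp.tendsto_atTop_zero {f : ℕ → E} (hf : Memℓp f 2) : Tendsto f atTop (𝓝 0) := by
  have h : Tendsto (fun n => ‖f n‖ ^ 2) atTop (𝓝 0) := by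
    simpa using (hf.summable (by norm_num)).tendsto_atTop_zero
  rw [tendsto_zero_iff_norm_tendsto_zero]
  simpa using h.sqrt

theorem memℓp_of_eq_zero_of_nonpos {f : ℤ → E} (h0 : ∀ m ≤ 0, f m = 0)
    (h : Summable fun n : ℕ => ‖f (n + 1)‖ ^ 2) : Memℓp f 2 := by
  refine memℓp_gen (Summable.of_nat_of_neg ?_ ?_)
  · rw [← summable_nat_add_iff 1]
    simpa using h
  · simp [h0 _ (neg_nonpos.2 (Int.natCast_nonneg _))]

variable {𝕜 : Type*} [RCLike 𝕜]

theorem Memℓp.mul_infty {f g : α → 𝕜} (hf : Memℓp f p) (hg : Memℓp g ∞) :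
    Memℓp (fun i => f i * g i) p := by
  simpa using hf.bilin_of_top_right (fun _ => ContinuousLinearMap.mul 𝕜 𝕜)
    (fun _ => ContinuousLinearMap.opNorm_mul_le 𝕜 𝕜) hg

theorem Memℓp.summable_mul {f g : α → 𝕜} (hf : Memℓp f 2) (hg : Memℓp g 2) :
    Summable fun i => f i * g i := by
  have : Memℓp (fun i => f i * g i) 1 := by
    simpa using hf.holder 1 hg (fun _ => ContinuousLinearMap.mul 𝕜 𝕜)
      (fun _ => ContinuousLinearMap.opNorm_mul_le 𝕜 𝕜)
  exact this.summable_of_one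

theorem Memℓp.summable_re_mul_conj {f g : α → ℂ} (hf : Memℓp f 2) (hg : Memℓp g 2) :
    Summable fun i => (f i * conj (g i)).re :=
  (Complex.hasSum_re (hf.summable_mul hg.star_mem).hasSum).summable

end Memℓp

theorem tsum_succ_sub_eq_of_tendsto {G : Type*} [AddCommGroup G] [TopologicalSpace G]
    [IsTopologicalAddGroup G] [T2Space G] {q : ℕ → G} {l : G}
    (hs : Summable fun n => q (n + 1) - q n) (hq : Tendsto q atTop (𝓝 l)) :
    ∑' n, (q (n + 1) - q n) = l - q 0 := by
  refine tendsto_nhds_unique hs.hasSum.tendsto_sum_nat ?_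
  simpa only [Finset.sum_range_sub] using hq.sub_const (q 0)

namespace Sabra

variable {k₀ : ℝ} {x u v w : ℕ → ℂ}

theorem kseq_add (k₀ : ℝ) (m j : ℤ) : kseq k₀ (m + j) = 2 ^ j * kseq k₀ m := by
  rw [kseq, kseq, zpow_add₀ two_ne_zero]
  ring

theorem kseq_add_one (k₀ : ℝ) (m : ℤ) : kseq k₀ (m + 1) = 2 * kseq k₀ m := by
  simpa using kseq_add k₀ m 1

theorem ext_of_nonpos (x : ℕ → ℂ) {m : ℤ} (hm : m ≤ 0) : ext x m = 0 :=
  if_neg (by omega)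

@[simp]
theorem ext_natCast_add_one (x : ℕ → ℂ) (n : ℕ) : ext x (n + 1) = x (n + 1) := by
  simp [ext]

@[simp]
theorem ext_conj (x : ℕ → ℂ) (m : ℤ) : ext (fun n => conj (x n)) m = conj (ext x m) := by
  unfold ext
  split_ifs <;> simp

@[simp]
theorem memH_conj : memH (fun n => conj (x n)) ↔ memH x := by
  simp [memH]

@[simp]
theorem memV_conj : memV k₀ (fun n => conj (x n)) ↔ memV k₀ x := by
  simp [memV]

theorem memℓp_of_memH (hx : memH x) : Memℓp (fun n => x (n + 1)) 2 :=
  memℓp_gen (by simpa [memH] using hx)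

theorem memℓp_ext (hx : memH x) : Memℓp (ext x) 2 :=
  memℓp_of_eq_zero_of_nonpos (fun _ => ext_of_nonpos x) (by simpa [memH] using hx)

theorem memℓp_kseq_mul_ext (hx : memV k₀ x) : Memℓp (fun m => (kseq k₀ m : ℂ) * ext x m) 2 :=
  memℓp_of_eq_zero_of_nonpos (fun _ hm => by simp [ext_of_nonpos x hm])
    (by simpa [mul_pow] using hx.2)

theorem memℓp_ext_shift (hx : memH x) (i : ℤ) : Memℓp (fun n : ℕ => ext x (n + i)) 2 :=
  (memℓp_ext hx).comp_injective (by norm_num) fun a b h => by simpa using h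

theorem memℓp_kseq_mul_ext_shift (hx : memV k₀ x) (s i : ℤ) :
    Memℓp (fun n : ℕ => (kseq k₀ (n + s) : ℂ) * ext x (n + i)) 2 := by
  have h : Memℓp (fun n : ℕ => (kseq k₀ (n + i) : ℂ) * ext x (n + i)) 2 :=
    (memℓp_kseq_mul_ext hx).comp_injective (by norm_num) fun a b h => by simpa using h
  convert h.const_smul ((2 : ℂ) ^ (s - i)) using 1
  funext n
  rw [show (n : ℤ) + s = n + i + (s - i) by ring, kseq_add]
  simp [mul_assoc]

theorem memℓp_kseq_mul_ext_mul_ext (huv : (memV k₀ u ∧ memH v) ∨ (memH u ∧ memV k₀ v))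
    (s i j : ℤ) :
    Memℓp (fun n : ℕ => (kseq k₀ (n + s) : ℂ) * (ext u (n + i) * ext v (n + j))) 2 := by
  rcases huv with ⟨hu, hv⟩ | ⟨hu, hv⟩
  · simpa only [mul_assoc] using (memℓp_kseq_mul_ext_shift hu s i).mul_infty
      ((memℓp_ext_shift hv j).of_exponent_ge le_top)
  · simpa only [mul_assoc, mul_comm (ext v _)] using (memℓp_kseq_mul_ext_shift hv s j).mul_infty
      ((memℓp_ext_shift hu i).of_exponent_ge le_top)

theorem memℓp_kseq_mul_ext_mul_ext_mul_ext
    (huv : (memV k₀ u ∧ memH v) ∨ (memH u ∧ memV k₀ v)) (hw : memH w) (s i j l : ℤ) :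
    Memℓp (fun n : ℕ =>
      (kseq k₀ (n + s) : ℂ) * (ext u (n + i) * ext v (n + j)) * ext w (n + l)) 2 :=
  (memℓp_kseq_mul_ext_mul_ext huv s i j).mul_infty ((memℓp_ext_shift hw l).of_exponent_ge le_top)

theorem memℓp_sabraB (δ : ℝ) (huv : (memV k₀ u ∧ memH v) ∨ (memH u ∧ memV k₀ v)) :
    Memℓp (fun n => sabraB k₀ δ u v (n + 1)) 2 := by
  have huv' : (memV k₀ u ∧ memH (fun n => conj (v n))) ∨
      (memH u ∧ memV k₀ (fun n => conj (v n))) := by simpa using huv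
  have hu'v : (memV k₀ (fun n => conj (u n)) ∧ memH v) ∨
      (memH (fun n => conj (u n)) ∧ memV k₀ v) := by simpa using huv
  have := (((((((memℓp_kseq_mul_ext_mul_ext huv' 2 3 2).const_smul (1 + δ : ℂ)).add
    ((memℓp_kseq_mul_ext_mul_ext hu'v 2 2 3).const_smul (2 - δ : ℂ))).add
    ((memℓp_kseq_mul_ext_mul_ext hu'v 1 0 2).const_smul (1 - 2 * δ : ℂ))).sub
    ((memℓp_kseq_mul_ext_mul_ext huv' 1 2 0).const_smul (1 + δ : ℂ))).add
    ((memℓp_kseq_mul_ext_mul_ext huv 0 0 (-1)).const_smul (2 - δ : ℂ))).add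
    ((memℓp_kseq_mul_ext_mul_ext huv 0 (-1) 0).const_smul (1 - 2 * δ : ℂ))).const_smul
    (Complex.I / 3)
  convert this using 1
  funext n
  simp only [sabraB, ext_conj, Pi.add_apply, Pi.sub_apply, Pi.smul_apply, smul_eq_mul]
  push_cast
  ring_nf

/-- The flux `Π_n`: the triad terms straddling the boundary between shells `n` and `n + 1`. -/
def sabraFlux (k₀ δ : ℝ) (u v w : ℕ → ℂ) (n : ℕ) : ℂ :=
  Complex.I / 3 * kseq k₀ ((n : ℤ) + 1) *
    ((δ - 1 / 2) * ext u ((n : ℤ) - 1) *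
        (ext v n * conj (ext w ((n : ℤ) + 1)) + conj (ext v ((n : ℤ) + 1)) * ext w n)
      + (δ / 2 - 1) * ext u n *
        (ext v ((n : ℤ) - 1) * conj (ext w ((n : ℤ) + 1))
          + conj (ext v ((n : ℤ) + 1)) * ext w ((n : ℤ) - 1))
      + (δ - 2) * ext u ((n : ℤ) + 1) *
        (ext v n * conj (ext w ((n : ℤ) + 2)) + conj (ext v ((n : ℤ) + 2)) * ext w n)
      + (δ + 1) * ext u ((n : ℤ) + 2) *
        conj (ext v n * ext w ((n : ℤ) + 1) + ext v ((n : ℤ) + 1) * ext w n))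

theorem sabraFlux_zero (k₀ δ : ℝ) (u v w : ℕ → ℂ) : sabraFlux k₀ δ u v w 0 = 0 := by
  simp [sabraFlux, ext_of_nonpos]

theorem re_sabraB_mul_conj_add_re_sabraB_mul_conj (k₀ δ : ℝ) (u v w : ℕ → ℂ) (n : ℕ) :
    (sabraB k₀ δ u v (n + 1) * conj (w (n + 1))).re
        + (sabraB k₀ δ u w (n + 1) * conj (v (n + 1))).re
      = (sabraFlux k₀ δ u v w (n + 1)).re - (sabraFlux k₀ δ u v w n).re := by
  apply Complex.ofReal_injective
  push_cast
  simp only [Complex.re_eq_add_conj, ← ext_natCast_add_one, sabraB, sabraFlux, map_add, map_sub,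
    map_mul, map_div₀, map_one, map_ofNat, Complex.conj_conj, Complex.conj_I, Complex.conj_ofReal]
  push_cast
  simp only [kseq_add_one, add_sub_cancel_right]
  push_cast
  ring_nf

theorem memℓp_sabraFlux (δ : ℝ) (huv : (memV k₀ u ∧ memH v) ∨ (memH u ∧ memV k₀ v))
    (hw : memH w) : Memℓp (sabraFlux k₀ δ u v w) 2 := by
  have huv' : (memV k₀ u ∧ memH (fun n => conj (v n))) ∨
      (memH u ∧ memV k₀ (fun n => conj (v n))) := by simpa using huv
  have hw' : memH (fun n => conj (w n)) := by simpa using hw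
  have := (((((((((memℓp_kseq_mul_ext_mul_ext_mul_ext huv hw' 1 (-1) 0 1).const_smul
      (δ - 1 / 2 : ℂ)).add
    ((memℓp_kseq_mul_ext_mul_ext_mul_ext huv' hw 1 (-1) 1 0).const_smul (δ - 1 / 2 : ℂ))).add
    ((memℓp_kseq_mul_ext_mul_ext_mul_ext huv hw' 1 0 (-1) 1).const_smul (δ / 2 - 1 : ℂ))).add
    ((memℓp_kseq_mul_ext_mul_ext_mul_ext huv' hw 1 0 1 (-1)).const_smul (δ / 2 - 1 : ℂ))).add
    ((memℓp_kseq_mul_ext_mul_ext_mul_ext huv hw' 1 1 0 2).const_smul (δ - 2 : ℂ))).add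
    ((memℓp_kseq_mul_ext_mul_ext_mul_ext huv' hw 1 1 2 0).const_smul (δ - 2 : ℂ))).add
    ((memℓp_kseq_mul_ext_mul_ext_mul_ext huv' hw' 1 2 0 1).const_smul (δ + 1 : ℂ))).add
    ((memℓp_kseq_mul_ext_mul_ext_mul_ext huv' hw' 1 2 1 0).const_smul (δ + 1 : ℂ))).const_smul
    (Complex.I / 3)
  convert this using 1
  funext n
  simp only [sabraFlux, ext_conj, map_add, map_mul, Pi.add_apply, Pi.smul_apply, smul_eq_mul]
  ring_nf

end Sabra

theorem sabra_skew_symmetry_general (k₀ δ : ℝ) (u v w : ℕ → ℂ)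
    (h : (memV k₀ u ∧ memH v ∧ memH w) ∨ (memV k₀ v ∧ memV k₀ w ∧ memH u)) :
    innerH (sabraB k₀ δ u v) w = - innerH (sabraB k₀ δ u w) v := by
  obtain ⟨huv, huw, hv, hw⟩ : ((memV k₀ u ∧ memH v) ∨ (memH u ∧ memV k₀ v)) ∧
      ((memV k₀ u ∧ memH w) ∨ (memH u ∧ memV k₀ w)) ∧ memH v ∧ memH w := by
    rcases h with ⟨hu, hv, hw⟩ | ⟨hv, hw, hu⟩
    · exact ⟨.inl ⟨hu, hv⟩, .inl ⟨hu, hw⟩, hv, hw⟩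
    · exact ⟨.inr ⟨hu, hv⟩, .inr ⟨hu, hw⟩, hv.1, hw.1⟩
  have hBv := (Sabra.memℓp_sabraB δ huv).summable_re_mul_conj (Sabra.memℓp_of_memH hw)
  have hBw := (Sabra.memℓp_sabraB δ huw).summable_re_mul_conj (Sabra.memℓp_of_memH hv)
  have hflux : Tendsto (fun n => (Sabra.sabraFlux k₀ δ u v w n).re) atTop (𝓝 0) := by
    have := (Complex.continuous_re.tendsto 0).comp
      (Sabra.memℓp_sabraFlux δ huv hw).tendsto_atTop_zero
    rwa [Complex.zero_re] at this
  have hsum := tsum_succ_sub_eq_of_tendsto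
    (by simpa only [← Sabra.re_sabraB_mul_conj_add_re_sabraB_mul_conj] using hBv.add hBw) hflux
  unfold innerH
  rw [eq_neg_iff_add_eq_zero, ← hBv.tsum_add hBw]
  simpa [← Sabra.re_sabraB_mul_conj_add_re_sabraB_mul_conj, Sabra.sabraFlux_zero] using hsum

/-- Skew-symmetry: `⟨B(u,v), w⟩_H = −⟨B(u,w), v⟩_H` for all `u ∈ V`, `v, w ∈ H`,
and also for all `v, w ∈ V`, `u ∈ H`, for the Sabra bilinear operator with parameter `δ`. -/
theorem sabra_skew_symmetry (k₀ δ : ℝ) (hk₀ : 0 < k₀) (u v w : ℕ → ℂ)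
    (h : (memV k₀ u ∧ memH v ∧ memH w) ∨ (memV k₀ v ∧ memV k₀ w ∧ memH u)) :
    innerH (sabraB k₀ δ u v) w = - innerH (sabraB k₀ δ u w) v :=
  sabra_skew_symmetry_general k₀ δ u v w h
end
end
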